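/- arXiv:2209.11591 — 3 statements merged into one kernel-verified Lean document; each statement's English description precedes it below -/
import Mathlib

section
/- Let Xin, Xnot, X⁺ and Z be jointly distributed random variables taking values in nonempty finite types, and write X = (Xin, Xnot). Assume (i) Z and Xnot are conditionally independent given (Xin, X⁺), and (ii) X⁺ and Xnot are conditionally independent given Xin. Then Iaug(X; X⁺; Z) = Iaug(Xin; X⁺; Z); that is, H((Xin, Xnot)) − H((Xin, Xnot, X⁺) ∣ Z) = H(Xin) − H((Xin, X⁺) ∣ Z). (Theorem 1 of the paper: the augmented mutual information over the full state equals the augmented mutual information over the involved subset alone.) -/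
open Real

/-- `p` is a probability mass function on the finite type `Ω`. -/
def IsPmf {Ω : Type*} [Fintype Ω] (p : Ω → ℝ) : Prop :=
  (∀ ω, 0 ≤ p ω) ∧ ∑ ω, p ω = 1

/-- Shannon entropy of a pmf `q` on a finite type, with the convention `0 · log 0 = 0`. -/
noncomputable def entFun {S : Type*} [Fintype S] (q : S → ℝ) : ℝ :=
  ∑ s, Real.negMulLog (q s)

/-- The (marginal) distribution of the random variable `f : Ω → S` under `p`. -/
noncomputable def distOf {Ω S : Type*} [Fintype Ω] [Fintype S] [DecidableEq S]
    (p : Ω → ℝ) (f : Ω → S) : S → ℝ :=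
  fun s => ∑ ω, if f ω = s then p ω else 0

/-- Entropy `H(f)` of a (jointly distributed) random variable: the entropy of its marginal. -/
noncomputable def entOf {Ω S : Type*} [Fintype Ω] [Fintype S] [DecidableEq S]
    (p : Ω → ℝ) (f : Ω → S) : ℝ :=
  entFun (distOf p f)

/-- Conditional pmf of `f` given `g = t` :  `s ↦ p(f = s, g = t) / p(g = t)`. -/
noncomputable def condPmf {Ω S T : Type*} [Fintype Ω] [Fintype S] [DecidableEq S]
    [Fintype T] [DecidableEq T] (p : Ω → ℝ) (f : Ω → S) (g : Ω → T) (t : T) : S → ℝ :=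
  fun s => distOf p (fun ω => (f ω, g ω)) (s, t) / distOf p g t

/-- Conditional entropy `H(f ∣ g) = ∑ₜ p(g = t) · H(f ∣ g = t)`. -/
noncomputable def condEntOf {Ω S T : Type*} [Fintype Ω] [Fintype S] [DecidableEq S]
    [Fintype T] [DecidableEq T] (p : Ω → ℝ) (f : Ω → S) (g : Ω → T) : ℝ :=
  ∑ t, distOf p g t * entFun (condPmf p f g t)

/-- Mutual information `I(f;g) = H(f) − H(f ∣ g)`. -/
noncomputable def miOf {Ω S T : Type*} [Fintype Ω] [Fintype S] [DecidableEq S]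
    [Fintype T] [DecidableEq T] (p : Ω → ℝ) (f : Ω → S) (g : Ω → T) : ℝ :=
  entOf p f - condEntOf p f g

/-- Augmented mutual information `Iaug(X; X⁺; Z) = H(X) − H((X,X⁺) ∣ Z)`. -/
noncomputable def miAug {Ω S S' T : Type*} [Fintype Ω] [Fintype S] [DecidableEq S]
    [Fintype S'] [DecidableEq S'] [Fintype T] [DecidableEq T]
    (p : Ω → ℝ) (X : Ω → S) (Xp : Ω → S') (Z : Ω → T) : ℝ :=
  entOf p X - condEntOf p (fun ω => (X ω, Xp ω)) Z

/-- `f` and `g` are conditionally independent given `h` under the joint pmf `p`: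
`p(f = s, g = t ∣ h = u) = p(f = s ∣ h = u) · p(g = t ∣ h = u)` for every `u` with
positive probability. -/
def CondIndep {Ω S T U : Type*} [Fintype Ω] [Fintype S] [DecidableEq S]
    [Fintype T] [DecidableEq T] [Fintype U] [DecidableEq U]
    (p : Ω → ℝ) (f : Ω → S) (g : Ω → T) (h : Ω → U) : Prop :=
  ∀ u : U, 0 < distOf p h u → ∀ (s : S) (t : T),
    condPmf p (fun ω => (f ω, g ω)) h u (s, t) =
      condPmf p f h u s * condPmf p g h u t

/-! The conditional entropy and the entropy in `Iaug` are both expectations of logarithms of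
marginal pmfs, so each `Iaug` is the expectation of
`log (p(x, x⁺, z) / p(z)) - log p(x)`. On the support, conditional independence (i) gives
`p(xᵢ, xₙ, x⁺, z) p(xᵢ, x⁺) = p(xᵢ, x⁺, z) p(xᵢ, xₙ, x⁺)` and (ii) gives
`p(xᵢ, xₙ, x⁺) p(xᵢ) = p(xᵢ, x⁺) p(xᵢ, xₙ)`; together
`p(xᵢ, xₙ, x⁺, z) p(xᵢ) = p(xᵢ, x⁺, z) p(xᵢ, xₙ)`, so the two integrands agree pointwise. -/

open Finset Real

lemma Real.log_div_sub_log_eq_of_mul_eq {x y x' y' d : ℝ} (hx : x ≠ 0) (hy : y ≠ 0)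
    (hx' : x' ≠ 0) (hy' : y' ≠ 0) (hd : d ≠ 0) (h : x * y' = x' * y) :
    log (x / d) - log y = log (x' / d) - log y' := by
  have := congrArg log h
  rw [log_mul hx hy', log_mul hx' hy] at this
  rw [log_div hx hd, log_div hx' hd]
  linarith

section Entropy

variable {Ω : Type*} [Fintype Ω] {p : Ω → ℝ}
variable {S T U : Type*} [Fintype S] [DecidableEq S] [Fintype T] [DecidableEq T]
  [Fintype U] [DecidableEq U]

lemma distOf_congr {f : Ω → S} {g : Ω → T} {s : S} {t : T} (h : ∀ ω, f ω = s ↔ g ω = t) :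
    distOf p f s = distOf p g t :=
  sum_congr rfl fun ω _ => if_congr (h ω) rfl rfl

lemma distOf_nonneg (hp : ∀ ω, 0 ≤ p ω) (f : Ω → S) (s : S) : 0 ≤ distOf p f s :=
  sum_nonneg fun ω _ => by split_ifs <;> simp [hp ω]

lemma le_distOf (hp : ∀ ω, 0 ≤ p ω) (f : Ω → S) (ω : Ω) : p ω ≤ distOf p f (f ω) := by
  simpa [distOf] using single_le_sum (f := fun ω' => if f ω' = f ω then p ω' else 0)
    (fun ω' _ => by split_ifs <;> simp [hp ω']) (mem_univ ω)

lemma distOf_pair_le (hp : ∀ ω, 0 ≤ p ω) (f : Ω → S) (g : Ω → T) (s : S) (t : T) :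
    distOf p (fun ω => (f ω, g ω)) (s, t) ≤ distOf p g t :=
  sum_le_sum fun ω _ => by
    by_cases h : g ω = t <;> split_ifs <;> simp_all

lemma sum_distOf_mul (f : Ω → S) (c : S → ℝ) :
    ∑ s, distOf p f s * c s = ∑ ω, p ω * c (f ω) := by
  simp only [distOf, sum_mul, ite_mul, zero_mul]
  rw [sum_comm]
  simp

lemma entOf_eq_neg_sum_log (f : Ω → S) :
    entOf p f = -∑ ω, p ω * log (distOf p f (f ω)) := by
  rw [entOf, entFun, ← sum_distOf_mul f (fun s => log (distOf p f s)), ← sum_neg_distrib]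
  exact sum_congr rfl fun s _ => by rw [negMulLog]; ring

lemma condEntOf_eq_neg_sum_log (hp : ∀ ω, 0 ≤ p ω) (f : Ω → S) (g : Ω → T) :
    condEntOf p f g = -∑ ω, p ω *
      log (distOf p (fun ω => (f ω, g ω)) (f ω, g ω) / distOf p g (g ω)) := by
  have term : ∀ s t, distOf p g t * negMulLog (condPmf p f g t s)
      = -(distOf p (fun ω => (f ω, g ω)) (s, t) *
          log (distOf p (fun ω => (f ω, g ω)) (s, t) / distOf p g t)) := by
    intro s t
    rcases (distOf_nonneg hp g t).eq_or_lt with hnull | hpos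
    · have hj : distOf p (fun ω => (f ω, g ω)) (s, t) = 0 :=
        (distOf_pair_le hp f g s t).trans hnull.ge |>.antisymm (distOf_nonneg hp _ _)
      simp [← hnull, hj]
    · rw [condPmf, negMulLog]
      field_simp
  rw [← sum_distOf_mul (fun ω => (f ω, g ω))
      (fun st => log (distOf p (fun ω => (f ω, g ω)) st / distOf p g st.2)),
    condEntOf, ← sum_neg_distrib, Fintype.sum_prod_type_right]
  exact sum_congr rfl fun t _ => by rw [entFun, mul_sum]; exact sum_congr rfl fun s _ => term s t

lemma CondIndep.distOf_mul_eq {f : Ω → S} {g : Ω → T} {k : Ω → U} (h : CondIndep p f g k)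
    {u : U} (hu : 0 < distOf p k u) (s : S) (t : T) :
    distOf p (fun ω => ((f ω, g ω), k ω)) ((s, t), u) * distOf p k u =
      distOf p (fun ω => (f ω, k ω)) (s, u) * distOf p (fun ω => (g ω, k ω)) (t, u) := by
  have := h u hu s t
  simp only [condPmf] at this
  field_simp at this
  linear_combination this

lemma miAug_eq_sum_log (hp : ∀ ω, 0 ≤ p ω) (X : Ω → S) (Xp : Ω → T) (Z : Ω → U) :
    miAug p X Xp Z = ∑ ω, p ω *
      (log (distOf p (fun ω => ((X ω, Xp ω), Z ω)) ((X ω, Xp ω), Z ω) / distOf p Z (Z ω)) -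
        log (distOf p X (X ω))) := by
  rw [miAug, entOf_eq_neg_sum_log, condEntOf_eq_neg_sum_log hp, neg_sub_neg,
    ← sum_sub_distrib]
  simp only [mul_sub]

variable {V : Type*} [Fintype V] [DecidableEq V]
  {A : Ω → S} {B : Ω → T} {C : Ω → U} {D : Ω → V}

lemma distOf_mul_distOf_eq_of_condIndep (hp : ∀ ω, 0 ≤ p ω)
    (hD : CondIndep p D B (fun ω => (A ω, C ω))) (hC : CondIndep p C B A)
    {ω : Ω} (hω : 0 < p ω) :
    distOf p (fun ω => (((A ω, B ω), C ω), D ω)) (((A ω, B ω), C ω), D ω) *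
        distOf p A (A ω) =
      distOf p (fun ω => ((A ω, C ω), D ω)) ((A ω, C ω), D ω) *
        distOf p (fun ω => (A ω, B ω)) (A ω, B ω) := by
  set pABCD := distOf p (fun ω => (((A ω, B ω), C ω), D ω)) (((A ω, B ω), C ω), D ω)
  set pABC := distOf p (fun ω => ((A ω, B ω), C ω)) ((A ω, B ω), C ω)
  set pACD := distOf p (fun ω => ((A ω, C ω), D ω)) ((A ω, C ω), D ω)
  set pAB := distOf p (fun ω => (A ω, B ω)) (A ω, B ω)
  set pAC := distOf p (fun ω => (A ω, C ω)) (A ω, C ω)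
  set pA := distOf p A (A ω)
  have hAC : 0 < pAC := hω.trans_le (le_distOf hp _ ω)
  have hi : pABCD * pAC = pACD * pABC := by
    convert hD.distOf_mul_eq hAC (D ω) (B ω) using 2 <;>
      exact distOf_congr fun _ => by simp only [Prod.mk.injEq]; tauto
  have hii : pABC * pA = pAC * pAB := by
    convert hC.distOf_mul_eq (hω.trans_le (le_distOf hp A ω)) (C ω) (B ω) using 2 <;>
      exact distOf_congr fun _ => by simp only [Prod.mk.injEq]; tauto
  apply mul_right_cancel₀ hAC.ne'
  linear_combination pA * hi + pACD * hii

theorem miAug_prod_eq_of_condIndep (hp : ∀ ω, 0 ≤ p ω)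
    (hD : CondIndep p D B (fun ω => (A ω, C ω))) (hC : CondIndep p C B A) :
    miAug p (fun ω => (A ω, B ω)) C D = miAug p A C D := by
  rw [miAug_eq_sum_log hp, miAug_eq_sum_log hp]
  refine sum_congr rfl fun ω _ => ?_
  rcases (hp ω).eq_or_lt with h0 | hω
  · simp [← h0]
  congr 1
  refine log_div_sub_log_eq_of_mul_eq ?_ ?_ ?_ ?_ ?_
    (distOf_mul_distOf_eq_of_condIndep hp hD hC hω) <;>
    exact (hω.trans_le (le_distOf hp _ ω)).ne'

end Entropy

theorem miAug_involved_general
    {Xin Xnot Xp Z : Type*}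
    [Fintype Xin] [DecidableEq Xin]
    [Fintype Xnot] [DecidableEq Xnot]
    [Fintype Xp] [DecidableEq Xp]
    [Fintype Z] [DecidableEq Z]
    (p : Xin × Xnot × Xp × Z → ℝ) (hp : IsPmf p)
    (hZ : CondIndep p (fun ω => ω.2.2.2) (fun ω => ω.2.1) (fun ω => (ω.1, ω.2.2.1)))
    (hXp : CondIndep p (fun ω => ω.2.2.1) (fun ω => ω.2.1) (fun ω => ω.1)) :
    miAug p (fun ω => (ω.1, ω.2.1)) (fun ω => ω.2.2.1) (fun ω => ω.2.2.2)
      = miAug p (fun ω => ω.1) (fun ω => ω.2.2.1) (fun ω => ω.2.2.2) :=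
  miAug_prod_eq_of_condIndep hp.1 hZ hXp

/-- **Theorem 1.** If (i) `Z ⟂ Xnot ∣ (Xin, X⁺)` and (ii) `X⁺ ⟂ Xnot ∣ Xin`, then the
augmented MI over the full state `X = (Xin, Xnot)` equals the augmented MI over the
involved subset `Xin` alone: `Iaug(X; X⁺; Z) = Iaug(Xin; X⁺; Z)`. -/
theorem miAug_involved
    {Xin Xnot Xp Z : Type*}
    [Fintype Xin] [DecidableEq Xin] [Nonempty Xin]
    [Fintype Xnot] [DecidableEq Xnot] [Nonempty Xnot]
    [Fintype Xp] [DecidableEq Xp] [Nonempty Xp]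
    [Fintype Z] [DecidableEq Z] [Nonempty Z]
    (p : Xin × Xnot × Xp × Z → ℝ) (hp : IsPmf p)
    (hZ : CondIndep p (fun ω => ω.2.2.2) (fun ω => ω.2.1) (fun ω => (ω.1, ω.2.2.1)))
    (hXp : CondIndep p (fun ω => ω.2.2.1) (fun ω => ω.2.1) (fun ω => ω.1)) :
    miAug p (fun ω => (ω.1, ω.2.1)) (fun ω => ω.2.2.1) (fun ω => ω.2.2.2)
      = miAug p (fun ω => ω.1) (fun ω => ω.2.2.1) (fun ω => ω.2.2.2) :=
  miAug_involved_general p hp hZ hXp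
end

section
/- Let S, S⁺ and O be nonempty finite types, let b be a pmf on S (the prior belief over the involved state), let T be a Markov kernel from S to S⁺ (the transition model) and let W be a Markov kernel from S × S⁺ to O (the observation model). Define the joint pmf p(x, x⁺, z) = b(x)·T(x⁺ ∣ x)·W(z ∣ x, x⁺) on S × S⁺ × O, and let Xin, X⁺, Z be the coordinate random variables. Then the augmented mutual information equals Iaug(Xin; X⁺; Z) = ∑_{x} b(x) ∑_{x⁺} T(x⁺ ∣ x)·log T(x⁺ ∣ x) + ∑_{x, x⁺, z} b(x)·T(x⁺ ∣ x)·W(z ∣ x, x⁺)·log W(z ∣ x, x⁺) − ∑_{x, x⁺, z} b(x)·T(x⁺ ∣ x)·W(z ∣ x, x⁺)·log η⁻¹(z), where η⁻¹(z) = ∑_{x'} b(x') ∑_{x⁺'} T(x⁺' ∣ x')·W(z ∣ x', x⁺'), with the convention 0·log 0 = 0. (The discrete form of equations (14)–(15); it shows the augmented MI can be computed directly from the prior belief and the probabilistic models, without reconstructing posterior belief surfaces.) -/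
open Real

private lemma nml_mul (x y : ℝ) :
    Real.negMulLog (x * y) = y * Real.negMulLog x + x * Real.negMulLog y := by
  rcases eq_or_ne x 0 with h | h
  · simp [h, Real.negMulLog]
  rcases eq_or_ne y 0 with h' | h'
  · simp [h', Real.negMulLog]
  simp only [Real.negMulLog, Real.log_mul h h']
  ring

private lemma key_cond (a c : ℝ) (ha : 0 ≤ a) (hac : a ≤ c) :
    c * Real.negMulLog (a / c) = Real.negMulLog a + a * Real.log c := by
  rcases ha.eq_or_lt with h | h
  · simp [← h, Real.negMulLog]
  · have hc : 0 < c := lt_of_lt_of_le h hac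
    simp only [Real.negMulLog, Real.log_div h.ne' hc.ne']
    field_simp
    ring

/-- **Equations (14)–(15), discrete form.** For a prior belief `b`, transition kernel `T`
and observation kernel `W`, the augmented MI of the induced joint distribution
`p(x, x⁺, z) = b(x)·T(x⁺∣x)·W(z∣x,x⁺)` can be computed directly from the models, without
reconstructing posterior belief surfaces:
`Iaug = ∑ b·T·log T + ∑ b·T·W·log W − ∑ b·T·W·log η⁻¹`. -/
theorem miAug_from_models
    {S Sp O : Type*}
    [Fintype S] [DecidableEq S] [Nonempty S]
    [Fintype Sp] [DecidableEq Sp] [Nonempty Sp]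
    [Fintype O] [DecidableEq O] [Nonempty O]
    (b : S → ℝ) (hb : (∀ x, 0 ≤ b x) ∧ ∑ x, b x = 1)
    (T : S → Sp → ℝ) (hT : ∀ x, (∀ xp, 0 ≤ T x xp) ∧ ∑ xp, T x xp = 1)
    (W : S → Sp → O → ℝ) (hW : ∀ x xp, (∀ z, 0 ≤ W x xp z) ∧ ∑ z, W x xp z = 1) :
    miAug (fun ω : S × Sp × O => b ω.1 * T ω.1 ω.2.1 * W ω.1 ω.2.1 ω.2.2)
        (fun ω => ω.1) (fun ω => ω.2.1) (fun ω => ω.2.2)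
      = (∑ x, b x * ∑ xp, T x xp * Real.log (T x xp))
        + (∑ x, ∑ xp, ∑ z, b x * T x xp * W x xp z * Real.log (W x xp z))
        - (∑ x, ∑ xp, ∑ z, b x * T x xp * W x xp z *
            Real.log (∑ x', b x' * ∑ xp', T x' xp' * W x' xp' z)) := by
    classical
  set p : S × Sp × O → ℝ := fun ω => b ω.1 * T ω.1 ω.2.1 * W ω.1 ω.2.1 ω.2.2 with hpdef
  set η : O → ℝ := fun z => ∑ x', b x' * ∑ xp', T x' xp' * W x' xp' z with hηdef
  have hp0 : ∀ x xp z, 0 ≤ p (x, xp, z) := fun x xp z =>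
    mul_nonneg (mul_nonneg (hb.1 x) ((hT x).1 xp)) ((hW x xp).1 z)
  have hη_eq : ∀ z, η z = ∑ x, ∑ xp, p (x, xp, z) := by
    intro z
    simp only [hηdef, hpdef, Finset.mul_sum, mul_assoc]
  have hple : ∀ x xp z, p (x, xp, z) ≤ η z := by
    intro x xp z
    rw [hη_eq]
    calc p (x, xp, z) ≤ ∑ xp', p (x, xp', z) :=
          Finset.single_le_sum (fun i _ => hp0 x i z) (Finset.mem_univ xp)
      _ ≤ ∑ x', ∑ xp', p (x', xp', z) :=
          Finset.single_le_sum
            (fun i _ => Finset.sum_nonneg fun j _ => hp0 i j z) (Finset.mem_univ x)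
  -- marginal of X is b
  have hdX : distOf p (fun ω : S × Sp × O => ω.1) = b := by
    funext x0
    simp only [distOf]
    rw [Fintype.sum_prod_type]
    have h1 : ∀ x : S, (∑ y : Sp × O, if (x, y).1 = x0 then p (x, y) else 0)
        = if x = x0 then b x else 0 := by
      intro x
      by_cases h : x = x0
      · simp only [h, if_true]
        rw [Fintype.sum_prod_type]
        simp only [hpdef]
        calc ∑ xp, ∑ z, b x0 * T x0 xp * W x0 xp z
            = ∑ xp, b x0 * T x0 xp * ∑ z, W x0 xp z := by
              simp [Finset.mul_sum]
          _ = b x0 * ∑ xp, T x0 xp := by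
              simp only [(hW x0 _).2, mul_one, Finset.mul_sum]
          _ = b x0 := by rw [(hT x0).2, mul_one]
      · simp [h]
    rw [Finset.sum_congr rfl fun x _ => h1 x, Finset.sum_ite_eq' Finset.univ x0]
    simp
  -- marginal of Z is η
  have hdZ : distOf p (fun ω : S × Sp × O => ω.2.2) = η := by
    funext z0
    simp only [distOf]
    rw [Fintype.sum_prod_type, hη_eq]
    refine Finset.sum_congr rfl fun x _ => ?_
    rw [Fintype.sum_prod_type]
    refine Finset.sum_congr rfl fun xp _ => ?_
    simp [Finset.sum_ite_eq' Finset.univ z0 (fun z => p (x, xp, z))]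
  -- joint distribution of ((X, Xp), Z)
  have hdJ : ∀ x xp z,
      distOf p (fun ω : S × Sp × O => ((ω.1, ω.2.1), ω.2.2)) ((x, xp), z)
        = p (x, xp, z) := by
    intro x xp z
    simp only [distOf]
    have h2 : ∀ ω : S × Sp × O,
        (((ω.1, ω.2.1), ω.2.2) = ((x, xp), z)) ↔ ω = (x, xp, z) := by
      rintro ⟨a, c, d⟩
      simp [Prod.ext_iff, and_assoc]
    simp only [h2]
    rw [Finset.sum_ite_eq' Finset.univ (x, xp, z) p]
    simp
  -- conditional entropy
  have hcond : condEntOf p (fun ω : S × Sp × O => (ω.1, ω.2.1)) (fun ω => ω.2.2)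
      = ∑ z, ∑ x, ∑ xp,
          (Real.negMulLog (p (x, xp, z)) + p (x, xp, z) * Real.log (η z)) := by
    simp only [condEntOf, entFun, condPmf, hdZ]
    refine Finset.sum_congr rfl fun z _ => ?_
    rw [Fintype.sum_prod_type, Finset.mul_sum]
    refine Finset.sum_congr rfl fun x _ => ?_
    rw [Finset.mul_sum]
    refine Finset.sum_congr rfl fun xp _ => ?_
    rw [hdJ x xp z]
    exact key_cond _ _ (hp0 x xp z) (hple x xp z)
  -- assemble
  simp only [miAug, entOf]
  rw [hdX, hcond]
  have hswap : (∑ z, ∑ x, ∑ xp,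
      (Real.negMulLog (p (x, xp, z)) + p (x, xp, z) * Real.log (η z)))
      = (∑ x, ∑ xp, ∑ z, Real.negMulLog (p (x, xp, z)))
        + (∑ x, ∑ xp, ∑ z, p (x, xp, z) * Real.log (η z)) := by
    rw [← Finset.sum_add_distrib, Finset.sum_comm]
    refine Finset.sum_congr rfl fun x _ => ?_
    rw [← Finset.sum_add_distrib, Finset.sum_comm]
    refine Finset.sum_congr rfl fun xp _ => ?_
    rw [← Finset.sum_add_distrib]
  rw [hswap]
  -- expand negMulLog of the product
  have hexp : (∑ x, ∑ xp, ∑ z, Real.negMulLog (p (x, xp, z)))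
      = (∑ x, Real.negMulLog (b x))
        + (∑ x, ∑ xp, b x * Real.negMulLog (T x xp))
        + (∑ x, ∑ xp, ∑ z, b x * T x xp * Real.negMulLog (W x xp z)) := by
    have hterm : ∀ x xp z, Real.negMulLog (p (x, xp, z))
        = W x xp z * (T x xp * Real.negMulLog (b x))
          + W x xp z * (b x * Real.negMulLog (T x xp))
          + b x * T x xp * Real.negMulLog (W x xp z) := by
      intro x xp z
      simp only [hpdef]
      rw [nml_mul (b x * T x xp) (W x xp z), nml_mul (b x) (T x xp)]
      ring
    have hz : ∀ x xp (c : ℝ), (∑ z, W x xp z * c) = c := by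
      intro x xp c
      rw [← Finset.sum_mul, (hW x xp).2, one_mul]
    have hx2 : ∀ x xp, (∑ z, (W x xp z * (T x xp * Real.negMulLog (b x))
          + W x xp z * (b x * Real.negMulLog (T x xp))
          + b x * T x xp * Real.negMulLog (W x xp z)))
        = T x xp * Real.negMulLog (b x) + b x * Real.negMulLog (T x xp)
          + ∑ z, b x * T x xp * Real.negMulLog (W x xp z) := by
      intro x xp
      rw [Finset.sum_add_distrib, Finset.sum_add_distrib, hz, hz]
    have hx1 : ∀ x, (∑ xp, (T x xp * Real.negMulLog (b x)
          + b x * Real.negMulLog (T x xp)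
          + ∑ z, b x * T x xp * Real.negMulLog (W x xp z)))
        = Real.negMulLog (b x) + (∑ xp, b x * Real.negMulLog (T x xp))
          + ∑ xp, ∑ z, b x * T x xp * Real.negMulLog (W x xp z) := by
      intro x
      rw [Finset.sum_add_distrib, Finset.sum_add_distrib, ← Finset.sum_mul,
        (hT x).2, one_mul]
    simp only [hterm, hx2, hx1]
    rw [Finset.sum_add_distrib, Finset.sum_add_distrib]
  rw [hexp]
  have hB : (∑ x, ∑ xp, b x * Real.negMulLog (T x xp))
      = -(∑ x, b x * ∑ xp, T x xp * Real.log (T x xp)) := by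
    simp [Real.negMulLog, Finset.mul_sum, mul_assoc]
  have hC : (∑ x, ∑ xp, ∑ z, b x * T x xp * Real.negMulLog (W x xp z))
      = -(∑ x, ∑ xp, ∑ z, b x * T x xp * W x xp z * Real.log (W x xp z)) := by
    simp [Real.negMulLog, mul_assoc]
  have hD : (∑ x, ∑ xp, ∑ z, p (x, xp, z) * Real.log (η z))
      = ∑ x, ∑ xp, ∑ z, b x * T x xp * W x xp z *
          Real.log (∑ x', b x' * ∑ xp', T x' xp' * W x' xp' z) := by
    simp only [hpdef, hηdef]
  rw [hB, hC, hD]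
  simp only [entFun]
  ring
end

section
/- Let X₀, x₁, …, x_T and Z₁, …, Z_T be jointly distributed random variables taking values in nonempty finite types, write X_t := (X₀, x₁, …, x_t) and Z_{1:t} := (Z₁, …, Z_t), and define M_t := H(X₀) − H(X_t ∣ Z_{1:t}) and, for each realization z_{1:i−1} with positive probability, Icon_i(z_{1:i−1}) := H(X_{i−1} ∣ Z_{1:i−1}=z_{1:i−1}) − ∑_{z_i} p(Z_i=z_i ∣ Z_{1:i−1}=z_{1:i−1})·H(X_i ∣ Z_{1:i}=(z_{1:i−1}, z_i)). Define the incremental rewards ρ'_t(z_{1:t}) := ∑_{i=1}^{t+1} Icon_i(z_{1:i−1}) for 0 ≤ t ≤ T−1. Then the objective reformulated with the incremental rewards equals the original sum of sequential augmented mutual informations: ∑_{z_{1:T−1}} p(Z_{1:T−1}=z_{1:T−1}) · ∑_{t=0}^{T−1} ρ'_t(z_{1:t}) = ∑_{t=1}^{T} M_t. (The objective-equality content of Theorem 4: solving the ρ-POMDP with the reward ρ'_t is equivalent to solving it with the original sequential information-gain reward.) -/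
open Real

section Sequential

variable {T : ℕ} {X0 : Type*} {Xs Zs : ℕ → Type*}

/-- Sample space of trajectories: prior state `X₀`, augmented states `x₁, …, x_T`
and observations `Z₁, …, Z_T`. -/
abbrev Traj (T : ℕ) (X0 : Type*) (Xs Zs : ℕ → Type*) : Type _ :=
  X0 × ((i : Fin T) → Xs i.val) × ((i : Fin T) → Zs i.val)

/-- The state at time `t`, `X_t = (X₀, x₁, …, x_t)`. -/
def Xpre (t : ℕ) (ht : t ≤ T) (ω : Traj T X0 Xs Zs) :
    X0 × ((j : Fin t) → Xs j.val) :=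
  (ω.1, fun j => ω.2.1 ⟨j.val, lt_of_lt_of_le j.isLt ht⟩)

/-- The observation sequence up to time `t`, `Z_{1:t} = (Z₁, …, Z_t)`. -/
def Zpre (t : ℕ) (ht : t ≤ T) (ω : Traj T X0 Xs Zs) : (j : Fin t) → Zs j.val :=
  fun j => ω.2.2 ⟨j.val, lt_of_lt_of_le j.isLt ht⟩

/-- Appending one more observation realization to a realization of `Z_{1:t}`. -/
def snocObs {t : ℕ} (z : (j : Fin t) → Zs j.val) (z' : Zs t) :
    (j : Fin (t + 1)) → Zs j.val :=
  fun j =>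
    if h : j.val < t then z ⟨j.val, h⟩
    else cast (congrArg Zs (by have := j.isLt; omega : t = j.val)) z'

end Sequential

section Aux

lemma aux_sum_distOf_mul {Ω A : Type*} [Fintype Ω] [Fintype A] [DecidableEq A]
    (p : Ω → ℝ) (g : Ω → A) (f : A → ℝ) :
    ∑ a, distOf p g a * f a = ∑ ω, p ω * f (g ω) := by
  unfold distOf
  simp only [Finset.sum_mul, ite_mul, zero_mul]
  rw [Finset.sum_comm]
  simp

lemma aux_sum_distOf_comp {Ω A B : Type*} [Fintype Ω] [Fintype A] [DecidableEq A]
    [Fintype B] [DecidableEq B]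
    (p : Ω → ℝ) (g : Ω → A) (r : A → B) (f : B → ℝ) :
    ∑ a, distOf p g a * f (r a) = ∑ b, distOf p (fun ω => r (g ω)) b * f b := by
  rw [aux_sum_distOf_mul p g (fun a => f (r a)), aux_sum_distOf_mul p (fun ω => r (g ω)) f]

lemma aux_distOf_congr {Ω A B : Type*} [Fintype Ω] [Fintype A] [DecidableEq A]
    [Fintype B] [DecidableEq B]
    (p : Ω → ℝ) (f : Ω → A) (g : Ω → B) (a : A) (b : B)
    (h : ∀ ω, f ω = a ↔ g ω = b) : distOf p f a = distOf p g b :=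
  Finset.sum_congr rfl fun ω _ => if_congr (h ω) rfl rfl

lemma aux_distOf_mul_condPmf {Ω S T : Type*} [Fintype Ω] [Fintype S] [DecidableEq S]
    [Fintype T] [DecidableEq T] (p : Ω → ℝ) (hp : ∀ ω, 0 ≤ p ω)
    (f : Ω → S) (g : Ω → T) (t : T) (s : S) :
    distOf p g t * condPmf p f g t s = distOf p (fun ω => (f ω, g ω)) (s, t) := by
  unfold condPmf
  by_cases h : distOf p g t = 0
  · rw [h, zero_mul]
    symm
    have hz : ∀ ω, g ω = t → p ω = 0 := by
      intro ω hω
      have h0 := (Finset.sum_eq_zero_iff_of_nonneg (fun ω _ => by split <;> simp [hp ω])).mp h ω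
        (Finset.mem_univ ω)
      simpa [hω] using h0
    refine Finset.sum_eq_zero fun ω _ => ?_
    by_cases hgt : g ω = t
    · simp [hz ω hgt]
    · simp [Prod.ext_iff, hgt]
  · rw [mul_comm, div_mul_cancel₀ _ h]

end Aux

section SequentialAux

variable {T : ℕ} {X0 : Type*} {Xs Zs : ℕ → Type*}

def auxRestr {k n : ℕ} (h : k ≤ n) (z : (j : Fin n) → Zs j.val) :
    (j : Fin k) → Zs j.val :=
  fun j => z ⟨j.val, lt_of_lt_of_le j.isLt h⟩

lemma aux_restr_snoc {k : ℕ} (z : (j : Fin k) → Zs j.val) (z' : Zs k) :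
    auxRestr (Nat.le_succ k) (snocObs z z') = z := by
  funext j
  simp only [auxRestr, snocObs]
  rw [dif_pos j.isLt]

lemma aux_snoc_last {k : ℕ} (z : (j : Fin k) → Zs j.val) (z' : Zs k) :
    snocObs z z' ⟨k, Nat.lt_succ_self k⟩ = z' := by
  simp only [snocObs]
  rw [dif_neg (lt_irrefl k)]
  exact cast_eq_iff_heq.mpr HEq.rfl

lemma aux_snoc_restr {k : ℕ} (w : (j : Fin (k + 1)) → Zs j.val) :
    snocObs (auxRestr (Nat.le_succ k) w) (w ⟨k, Nat.lt_succ_self k⟩) = w := by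
  funext j
  obtain ⟨jv, hj⟩ := j
  simp only [snocObs, auxRestr]
  by_cases h : jv < k
  · rw [dif_pos h]
  · have : jv = k := by omega
    subst this
    rw [dif_neg h]
    exact cast_eq_iff_heq.mpr HEq.rfl

def snocEquiv (k : ℕ) :
    (((j : Fin k) → Zs j.val) × Zs k) ≃ ((j : Fin (k + 1)) → Zs j.val) where
  toFun x := snocObs x.1 x.2
  invFun w := (auxRestr (Nat.le_succ k) w, w ⟨k, Nat.lt_succ_self k⟩)
  left_inv x := by
    obtain ⟨z, z'⟩ := x
    simp [aux_restr_snoc, aux_snoc_last]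
  right_inv w := aux_snoc_restr w

lemma aux_Zpre_succ {k : ℕ} (hk : k + 1 ≤ T) (ω : Traj T X0 Xs Zs) :
    Zpre (k + 1) hk ω =
      snocObs (Zpre k (Nat.le_of_succ_le hk) ω) (ω.2.2 ⟨k, hk⟩) := by
  have := aux_snoc_restr (Zs := Zs) (Zpre (k + 1) hk ω)
  exact this.symm

end SequentialAux

section Aux2

variable {T : ℕ} {X0 : Type*} {Xs Zs : ℕ → Type*}
variable [Fintype X0] [DecidableEq X0] [Nonempty X0]
    [∀ i, Fintype (Xs i)] [∀ i, DecidableEq (Xs i)] [∀ i, Nonempty (Xs i)]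
    [∀ i, Fintype (Zs i)] [∀ i, DecidableEq (Zs i)] [∀ i, Nonempty (Zs i)]

lemma aux_event_iff {k : ℕ} (hk : k + 1 ≤ T) (ω : Traj T X0 Xs Zs)
    (z : (j : Fin k) → Zs j.val) (z' : Zs k) :
    ((ω.2.2 ⟨k, hk⟩ : Zs k), Zpre k (Nat.le_of_succ_le hk) ω) = (z', z) ↔
      Zpre (k + 1) hk ω = snocObs z z' := by
  constructor
  · intro h
    rw [Prod.mk.injEq] at h
    rw [aux_Zpre_succ hk ω, h.1, h.2]
  · intro h
    rw [aux_Zpre_succ hk ω] at h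
    have h1 := congrArg (auxRestr (Nat.le_succ k)) h
    rw [aux_restr_snoc, aux_restr_snoc] at h1
    have h2 := congrArg (fun w => w ⟨k, Nat.lt_succ_self k⟩) h
    simp only [aux_snoc_last] at h2
    rw [Prod.mk.injEq]
    exact ⟨h2, h1⟩

lemma aux_step (p : Traj T X0 Xs Zs → ℝ) (hp : IsPmf p) (k : ℕ) (hk : k + 1 ≤ T) :
    ∑ z : (j : Fin k) → Zs j.val,
      distOf p (Zpre k (Nat.le_of_succ_le hk)) z *
        (entFun (condPmf p (Xpre k (Nat.le_of_succ_le hk))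
            (Zpre k (Nat.le_of_succ_le hk)) z)
          - ∑ z' : Zs k,
              condPmf p (fun ω => ω.2.2 ⟨k, hk⟩) (Zpre k (Nat.le_of_succ_le hk)) z z'
                * entFun (condPmf p (Xpre (k + 1) hk) (Zpre (k + 1) hk) (snocObs z z')))
    = condEntOf p (Xpre k (Nat.le_of_succ_le hk)) (Zpre k (Nat.le_of_succ_le hk))
        - condEntOf p (Xpre (k + 1) hk) (Zpre (k + 1) hk) := by
  simp only [mul_sub, Finset.sum_sub_distrib]
  congr 1
  have key : ∀ (z : (j : Fin k) → Zs j.val) (z' : Zs k),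
      distOf p (Zpre k (Nat.le_of_succ_le hk)) z *
        condPmf p (fun ω => ω.2.2 ⟨k, hk⟩) (Zpre k (Nat.le_of_succ_le hk)) z z'
      = distOf p (Zpre (k + 1) hk) (snocObs z z') := by
    intro z z'
    rw [aux_distOf_mul_condPmf p hp.1]
    exact aux_distOf_congr p _ _ _ _ (fun ω => aux_event_iff hk ω z z')
  calc ∑ z, distOf p (Zpre k (Nat.le_of_succ_le hk)) z *
          ∑ z' : Zs k,
            condPmf p (fun ω => ω.2.2 ⟨k, hk⟩) (Zpre k (Nat.le_of_succ_le hk)) z z'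
              * entFun (condPmf p (Xpre (k + 1) hk) (Zpre (k + 1) hk) (snocObs z z'))
      = ∑ z, ∑ z' : Zs k,
          distOf p (Zpre (k + 1) hk) (snocObs z z')
            * entFun (condPmf p (Xpre (k + 1) hk) (Zpre (k + 1) hk) (snocObs z z')) := by
        refine Finset.sum_congr rfl fun z _ => ?_
        rw [Finset.mul_sum]
        refine Finset.sum_congr rfl fun z' _ => ?_
        rw [← mul_assoc, key]
    _ = ∑ w : (j : Fin (k + 1)) → Zs j.val,
          distOf p (Zpre (k + 1) hk) w
            * entFun (condPmf p (Xpre (k + 1) hk) (Zpre (k + 1) hk) w) := by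
        have e1 : (∑ x : ((j : Fin k) → Zs j.val) × Zs k,
            distOf p (Zpre (k + 1) hk) (snocEquiv (Zs := Zs) k x)
              * entFun (condPmf p (Xpre (k + 1) hk) (Zpre (k + 1) hk)
                  (snocEquiv (Zs := Zs) k x)))
            = ∑ z, ∑ z' : Zs k,
              distOf p (Zpre (k + 1) hk) (snocObs z z')
                * entFun (condPmf p (Xpre (k + 1) hk) (Zpre (k + 1) hk) (snocObs z z')) :=
          Fintype.sum_prod_type _
        rw [← e1]
        exact Equiv.sum_comp (snocEquiv (Zs := Zs) k)
          (fun w => distOf p (Zpre (k + 1) hk) w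
            * entFun (condPmf p (Xpre (k + 1) hk) (Zpre (k + 1) hk) w))
    _ = condEntOf p (Xpre (k + 1) hk) (Zpre (k + 1) hk) := rfl

lemma aux_base (p : Traj T X0 Xs Zs → ℝ) (hp : IsPmf p) :
    condEntOf p (Xpre 0 (Nat.zero_le T)) (Zpre 0 (Nat.zero_le T))
      = entOf p (fun ω => ω.1) := by
  have hZ : distOf p (Zpre (T := T) (X0 := X0) (Xs := Xs) 0 (Nat.zero_le T)) default = 1 := by
    unfold distOf
    simp only [Subsingleton.elim (α := (j : Fin 0) → Zs j.val) _ default, if_true]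
    exact hp.2
  unfold condEntOf
  rw [Fintype.sum_unique]
  rw [hZ, one_mul]
  unfold entOf entFun
  rw [Fintype.sum_prod_type]
  refine Finset.sum_congr rfl fun x0 _ => ?_
  rw [Fintype.sum_unique]
  congr 1
  unfold condPmf
  rw [hZ, div_one]
  refine aux_distOf_congr p _ _ _ _ fun ω => ?_
  constructor
  · intro h
    exact congrArg (fun q => q.1.1) h
  · intro h
    rw [Prod.ext_iff, Prod.ext_iff]
    exact ⟨⟨h, Subsingleton.elim _ _⟩, Subsingleton.elim _ _⟩

end Aux2

set_option maxHeartbeats 1000000 in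
/-- **Objective equality of Theorem 4.** With the incremental rewards
`ρ'_t(z_{1:t}) = ∑_{i=1}^{t+1} Icon_i(z_{1:i−1})`, the reformulated objective equals
the original sum of sequential augmented mutual informations:
`∑_{z_{1:T−1}} p(Z_{1:T−1}=z_{1:T−1}) · ∑_{t=0}^{T−1} ρ'_t(z_{1:t}) = ∑_{t=1}^{T} M_t`
where `M_t = H(X₀) − H(X_t ∣ Z_{1:t})`. (Below the inner index `k = i − 1` runs over
`Fin (t+1)` and prefixes of `z` are taken pointwise.) -/
theorem objective_incremental_rewards
    {T : ℕ} {X0 : Type*} {Xs Zs : ℕ → Type*}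
    [Fintype X0] [DecidableEq X0] [Nonempty X0]
    [∀ i, Fintype (Xs i)] [∀ i, DecidableEq (Xs i)] [∀ i, Nonempty (Xs i)]
    [∀ i, Fintype (Zs i)] [∀ i, DecidableEq (Zs i)] [∀ i, Nonempty (Zs i)]
    (p : Traj T X0 Xs Zs → ℝ) (hp : IsPmf p) (hT : 1 ≤ T) :
    ∑ z : ((j : Fin (T - 1)) → Zs j.val),
      distOf p (Zpre (T - 1) (by omega)) z *
        ∑ t : Fin T,
          ∑ k : Fin (t.val + 1),
            (entFun (condPmf p
                (Xpre k.val (by have := k.isLt; have := t.isLt; omega))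
                (Zpre k.val (by have := k.isLt; have := t.isLt; omega))
                (fun j : Fin k.val =>
                  z ⟨j.val, by have := j.isLt; have := k.isLt; have := t.isLt; omega⟩))
              - ∑ z' : Zs k.val,
                  condPmf p
                      (fun ω => ω.2.2 ⟨k.val, by have := k.isLt; have := t.isLt; omega⟩)
                      (Zpre k.val (by have := k.isLt; have := t.isLt; omega))
                      (fun j : Fin k.val =>
                        z ⟨j.val, by have := j.isLt; have := k.isLt; have := t.isLt; omega⟩)
                      z'
                    * entFun (condPmf p
                        (Xpre (k.val + 1) (by have := k.isLt; have := t.isLt; omega))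
                        (Zpre (k.val + 1) (by have := k.isLt; have := t.isLt; omega))
                        (snocObs
                          (fun j : Fin k.val =>
                            z ⟨j.val, by have := j.isLt; have := k.isLt; have := t.isLt; omega⟩)
                          z')))
      = ∑ t : Fin T,
          (entOf p (fun ω => ω.1)
            - condEntOf p (Xpre (t.val + 1) (by have := t.isLt; omega))
                (Zpre (t.val + 1) (by have := t.isLt; omega))) := by
  classical
  have hT1 : T - 1 ≤ T := by omega
  simp only [Finset.mul_sum]
  rw [Finset.sum_comm]
  set A : ℕ → ℝ := fun n =>
    if h : n ≤ T then condEntOf p (Xpre n h) (Zpre n h) else 0 with hA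
  refine Finset.sum_congr rfl fun t _ => ?_
  rw [Finset.sum_comm]
  have ht1 : t.val + 1 ≤ T := t.isLt
  have hrhs : entOf p (fun ω : Traj T X0 Xs Zs => ω.1)
      - condEntOf p (Xpre (t.val + 1) ht1) (Zpre (t.val + 1) ht1)
      = A 0 - A (t.val + 1) := by
    rw [hA]; beta_reduce
    rw [dif_pos (Nat.zero_le T), dif_pos ht1, aux_base p hp]
  rw [hrhs, ← Finset.sum_range_sub' A (t.val + 1),
    ← Fin.sum_univ_eq_sum_range (fun i => A i - A (i + 1)) (t.val + 1)]
  refine Finset.sum_congr rfl fun k _ => ?_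
  have hk1 : k.val + 1 ≤ T := by have := k.isLt; have := t.isLt; omega
  have hk2 : k.val ≤ T - 1 := by have := k.isLt; have := t.isLt; omega
  have hAk : condEntOf p (Xpre k.val (Nat.le_of_succ_le hk1))
        (Zpre k.val (Nat.le_of_succ_le hk1))
      - condEntOf p (Xpre (k.val + 1) hk1) (Zpre (k.val + 1) hk1)
      = A k.val - A (k.val + 1) := by
    rw [hA]; beta_reduce
    rw [dif_pos (Nat.le_of_succ_le hk1), dif_pos hk1]
  exact (aux_sum_distOf_comp p (Zpre (T - 1) hT1) (auxRestr (Zs := Zs) hk2)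
    (fun w => entFun (condPmf p (Xpre k.val (Nat.le_of_succ_le hk1))
        (Zpre k.val (Nat.le_of_succ_le hk1)) w)
      - ∑ z' : Zs k.val,
          condPmf p (fun ω => ω.2.2 ⟨k.val, hk1⟩)
              (Zpre k.val (Nat.le_of_succ_le hk1)) w z'
            * entFun (condPmf p (Xpre (k.val + 1) hk1) (Zpre (k.val + 1) hk1)
                (snocObs w z')))).trans ((aux_step p hp k.val hk1).trans hAk)
end
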